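/- Every map of symmetric spectra belonging to cof(FK), where K is the set of generating trivial cofibrations of the stable model structure on sequential spectra and F is the free symmetric spectrum functor, is a levelwise monomorphism of simplicial sets. -/

import Mathlib

open CategoryTheory CategoryTheory.Limits Simplicial Opposite

namespace SpectraFormal

def KanFibration {X Y : SSet} (f : X ⟶ Y) : Prop :=
  ∀ (n : ℕ) (i : Fin (n + 2)), HasLiftingProperty (SSet.horn (n + 1) i).ι f

def TrivialKanFibration {X Y : SSet} (f : X ⟶ Y) : Prop :=
  ∀ n : ℕ, HasLiftingProperty (SSet.boundary n).ι f

def Anodyne {X Y : SSet} (f : X ⟶ Y) : Prop :=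
  ∀ {A B : SSet} (g : A ⟶ B), KanFibration g → HasLiftingProperty f g

/-- The horn-filling condition `SSet.KanComplex` of the older Mathlib: every map
`Λ[n, i] ⟶ S` (for all `n` and all `i ≤ n`) extends along the horn inclusion. -/
def OldKanComplex (S : SSet.{0}) : Prop :=
  ∀ ⦃n : ℕ⦄ ⦃i : Fin (n + 1)⦄ (σ₀ : (Λ[n, i] : SSet.{0}) ⟶ S),
    ∃ σ : Δ[n] ⟶ S, σ₀ = (SSet.horn n i).ι ≫ σ

def WeakEquiv {X Y : SSet} (f : X ⟶ Y) : Prop :=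
  ∃ (Z : SSet) (i : X ⟶ Z) (p : Z ⟶ Y), Anodyne i ∧ TrivialKanFibration p ∧ i ≫ p = f

/-! ### Pointed simplicial sets -/

/-- A pointed simplicial set: a simplicial set together with a natural basepoint
(equivalently, a map from the terminal simplicial set). -/
structure PSSet : Type 1 where
  X : SSet.{0}
  pt : ∀ m, X.obj m
  pt_nat : ∀ {m m'} (g : m ⟶ m'), X.map g (pt m) = pt m'

/-- The type of "interval coordinates" in simplicial degree `m`: the `m`-simplices of the
standard `1`-simplex `Δ[1]`, encoded as morphisms of the simplex category. -/
abbrev ICoord (m : SimplexCategoryᵒᵖ) : Type := m.unop ⟶ SimplexCategory.mk 1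

/-- The two constant interval coordinates (the images of the two endpoints of `Δ[1]`). -/
abbrev iconst (m : SimplexCategoryᵒᵖ) (v : Fin 2) : ICoord m := SimplexCategory.const _ _ v

/-! ### Sequential spectra

A sequential spectrum is a sequence of pointed simplicial sets `X n` together with
bonding maps `X n ∧ S¹ → X (n+1)`, where `S¹ = Δ[1]/∂Δ[1]` is the simplicial circle.
We encode a map `X n ∧ S¹ ⟶ Y` faithfully as a natural family
`(X n).obj m × Δ[1].obj m → Y.obj m` which collapses the wedge
`X n × ∂Δ[1] ∪ {pt} × Δ[1]` to the basepoint; this is exactly the universal property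
of the smash product with the quotient circle `Δ[1]/∂Δ[1]`. -/
structure SeqSpectrum : Type 1 where
  lvl : ℕ → PSSet
  bond : ∀ (n : ℕ) (m : SimplexCategoryᵒᵖ), (lvl n).X.obj m → ICoord m → (lvl (n + 1)).X.obj m
  bond_nat : ∀ (n : ℕ) {m m'} (g : m ⟶ m') (x : (lvl n).X.obj m) (t : ICoord m),
    (lvl (n + 1)).X.map g (bond n m x t) = bond n m' ((lvl n).X.map g x) (g.unop ≫ t)
  bond_pt : ∀ n m (t : ICoord m), bond n m ((lvl n).pt m) t = (lvl (n + 1)).pt m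
  bond_const : ∀ n m (x : (lvl n).X.obj m) (v : Fin 2),
    bond n m x (iconst m v) = (lvl (n + 1)).pt m

/-- Morphisms of sequential spectra: levelwise maps of simplicial sets which preserve the
basepoints and commute with the bonding maps. -/
@[ext]
structure SeqHom (Xs Ys : SeqSpectrum) where
  app : ∀ n, (Xs.lvl n).X ⟶ (Ys.lvl n).X
  app_pt : ∀ n m, (app n).app m ((Xs.lvl n).pt m) = (Ys.lvl n).pt m
  app_bond : ∀ n m (x : (Xs.lvl n).X.obj m) (t : ICoord m),
    (app (n + 1)).app m (Xs.bond n m x t) = Ys.bond n m ((app n).app m x) t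

instance : Category SeqSpectrum where
  Hom := SeqHom
  id Xs := ⟨fun _ => 𝟙 _, fun _ _ => rfl, fun _ _ _ _ => rfl⟩
  comp {X Y Z} f g := ⟨fun n => f.app n ≫ g.app n,
    fun n m => by
      change (g.app n).app m ((f.app n).app m _) = _
      rw [f.app_pt, g.app_pt],
    fun n m x t => by
      change (g.app (n + 1)).app m ((f.app (n + 1)).app m _) = _
      rw [f.app_bond, g.app_bond]
      rfl⟩
  id_comp f := by apply SeqHom.ext; funext n; simp
  comp_id f := by apply SeqHom.ext; funext n; simp
  assoc f g h := by apply SeqHom.ext; funext n; simp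

@[simp] lemma seq_id_app (Xs : SeqSpectrum) (n : ℕ) :
    SeqHom.app (𝟙 Xs) n = 𝟙 (Xs.lvl n).X := rfl

@[simp] lemma seq_comp_app {Xs Ys Zs : SeqSpectrum} (f : Xs ⟶ Ys) (g : Ys ⟶ Zs) (n : ℕ) :
    SeqHom.app (f ≫ g) n = SeqHom.app f n ≫ SeqHom.app g n := rfl

/-! ### Level classes of maps and objects -/

/-- A level weak equivalence of sequential spectra. -/
def LevelWE {Xs Ys : SeqSpectrum} (f : Xs ⟶ Ys) : Prop := ∀ n, WeakEquiv (SeqHom.app f n)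

/-- A level (Kan) fibration of sequential spectra. -/
def LevelFib {Xs Ys : SeqSpectrum} (f : Xs ⟶ Ys) : Prop := ∀ n, KanFibration (SeqHom.app f n)

/-- A level trivial fibration of sequential spectra. -/
def LevelTrivFib {Xs Ys : SeqSpectrum} (f : Xs ⟶ Ys) : Prop :=
  ∀ n, TrivialKanFibration (SeqHom.app f n)

/-- A levelwise monomorphism of sequential spectra. -/
def LevelMono {Xs Ys : SeqSpectrum} (f : Xs ⟶ Ys) : Prop :=
  ∀ n m, Function.Injective ((SeqHom.app f n).app m)

/-- A levelwise Kan spectrum. -/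
def LevelKan (Xs : SeqSpectrum) : Prop := ∀ n, OldKanComplex (Xs.lvl n).X


/-! ### The loop space and `Ω`-spectra -/

/-- The pointed loop space of a pointed simplicial set: in degree `m` it consists of the
maps `Δ[m] × Δ[1] ⟶ X` collapsing `Δ[m] × ∂Δ[1]` to the basepoint (i.e. maps
`Δ[m]₊ ∧ S¹ → X`). -/
def Loops (P : PSSet) : SSet.{0} where
  obj m := {φ : ∀ (k : SimplexCategoryᵒᵖ), (k.unop ⟶ m.unop) × ICoord k → P.X.obj k //
    (∀ {k k'} (g : k ⟶ k') (a : k.unop ⟶ m.unop) (t : ICoord k),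
      P.X.map g (φ k (a, t)) = φ k' (g.unop ≫ a, g.unop ≫ t)) ∧
    (∀ (k : SimplexCategoryᵒᵖ) (a : k.unop ⟶ m.unop) (v : Fin 2),
      φ k (a, iconst k v) = P.pt k)}
  map {m m'} g := TypeCat.ofHom fun φ => ⟨fun k p => φ.1 k (p.1 ≫ g.unop, p.2),
    ⟨fun g' a t => by
      dsimp only
      rw [φ.2.1 g' (a ≫ g.unop) t, Category.assoc],
     fun k a v => φ.2.2 k (a ≫ g.unop) v⟩⟩
  map_id m := by
    ext φ : 3
    apply Subtype.ext
    funext k p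
    simp
  map_comp {m m' m''} g h := by
    ext φ : 3
    apply Subtype.ext
    funext k p
    simp

/-- The adjoint bonding map `X n ⟶ Ω X (n+1)` of a sequential spectrum. -/
def adjBond (Xs : SeqSpectrum) (n : ℕ) : (Xs.lvl n).X ⟶ Loops (Xs.lvl (n + 1)) where
  app m := TypeCat.ofHom fun x => ⟨fun k p => Xs.bond n k ((Xs.lvl n).X.map p.1.op x) p.2,
    ⟨fun {k k'} g a t => by
      rw [Xs.bond_nat, ← FunctorToTypes.map_comp_apply]
      rfl,
     fun k a v => Xs.bond_const n k _ v⟩⟩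
  naturality {m m'} g := by
    ext x : 3
    apply Subtype.ext
    funext k p
    change Xs.bond n k ((Xs.lvl n).X.map p.1.op ((Xs.lvl n).X.map g x)) p.2 = _
    rw [← FunctorToTypes.map_comp_apply]
    rfl

/-- An `Ω`-spectrum: a sequential spectrum which is levelwise a Kan complex and whose
adjoint bonding maps `X n ⟶ Ω X (n+1)` are weak equivalences. -/
def OmegaSpectrum (Xs : SeqSpectrum) : Prop :=
  LevelKan Xs ∧ ∀ n, WeakEquiv (adjBond Xs n)

/-! ### Stable homotopy groups

We define the stable homotopy groups of a sequential spectrum combinatorially: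
`π_k(X) = colim_n [S^{k+n}, X n]`, where `S^j = (Δ[1]/∂Δ[1])^{∧ j}` is the simplicial
`j`-sphere and the colimit is taken along the suspension maps induced by the bonding
maps.  A pointed map `S^j → P` is encoded faithfully as a natural family
`(Δ[1]^{×j})_m → P_m` which collapses the fat wedge (all tuples with some constant
coordinate) to the basepoint.  This computes the genuine stable homotopy groups for
levelwise Kan spectra, and `PiStarIso` below passes to levelwise Kan replacements first
(i.e. stable homotopy groups are "computed after fibrant replacement of the levels"). -/

/-- The `m`-simplices of the `j`-fold product `Δ[1]^{×j}`. -/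
abbrev Cube (j : ℕ) (m : SimplexCategoryᵒᵖ) : Type := Fin j → ICoord m

/-- A pointed map `S^j → P` from the simplicial `j`-sphere `(Δ[1]/∂Δ[1])^{∧ j}`. -/
@[ext]
structure SphereMap (j : ℕ) (P : PSSet) where
  φ : ∀ m, Cube j m → P.X.obj m
  nat : ∀ {m m'} (g : m ⟶ m') (c : Cube j m),
    P.X.map g (φ m c) = φ m' (fun i => g.unop ≫ c i)
  collapse : ∀ m (c : Cube j m), (∃ i v, c i = iconst m v) → φ m c = P.pt m

/-- (Pointed, simplicial) homotopy of sphere maps. -/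
def SphereHomotopic {j : ℕ} {P : PSSet} (a b : SphereMap j P) : Prop :=
  ∃ H : ∀ m, Cube j m → ICoord m → P.X.obj m,
    (∀ {m m'} (g : m ⟶ m') (c : Cube j m) (t : ICoord m),
      P.X.map g (H m c t) = H m' (fun i => g.unop ≫ c i) (g.unop ≫ t)) ∧
    (∀ m (c : Cube j m) (t : ICoord m), (∃ i v, c i = iconst m v) → H m c t = P.pt m) ∧
    (∀ m (c : Cube j m), H m c (iconst m 0) = a.φ m c) ∧
    (∀ m (c : Cube j m), H m c (iconst m 1) = b.φ m c)

/-- Pushing a sphere map forward along a pointed map of pointed simplicial sets. -/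
def SphereMap.push {j : ℕ} {P Q : PSSet} (f : P.X ⟶ Q.X)
    (hf : ∀ m, f.app m (P.pt m) = Q.pt m) (s : SphereMap j P) : SphereMap j Q where
  φ m c := f.app m (s.φ m c)
  nat {m m'} g c := by
    dsimp only
    rw [← s.nat g c]
    exact (NatTrans.naturality_apply f g (s.φ m c)).symm
  collapse m c h := by dsimp only; rw [s.collapse m c h, hf]

/-- The suspension `S^{j+1} → X (n+1)` of a sphere map `S^j → X n`, using the bonding map
of the spectrum. -/
def suspend (Xs : SeqSpectrum) {n j : ℕ} (s : SphereMap j (Xs.lvl n)) :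
    SphereMap (j + 1) (Xs.lvl (n + 1)) where
  φ m c := Xs.bond n m (s.φ m (fun i => c i.castSucc)) (c (Fin.last j))
  nat {m m'} g c := by rw [Xs.bond_nat, s.nat g]
  collapse m c := by
    rintro ⟨i, v, hiv⟩
    induction i using Fin.lastCases with
    | last => rw [hiv, Xs.bond_const]
    | cast i' => rw [s.collapse m _ ⟨i', v, hiv⟩, Xs.bond_pt]

/-- An element of the stable homotopy group `π_k` of a sequential spectrum: a sphere map
`S^j → X n` with `j = k + n`. -/
structure StableElt (k : ℤ) (Xs : SeqSpectrum) : Type 1 where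
  n : ℕ
  j : ℕ
  hj : (j : ℤ) = k + n
  s : SphereMap j (Xs.lvl n)

/-- The relation generating the stable homotopy group `π_k` as a colimit of homotopy
classes of sphere maps along the suspension maps. -/
inductive StableRel (k : ℤ) (Xs : SeqSpectrum) : StableElt k Xs → StableElt k Xs → Prop where
  | homotopic {n j : ℕ} (hj : (j : ℤ) = k + n) {s s' : SphereMap j (Xs.lvl n)}
      (h : SphereHomotopic s s') : StableRel k Xs ⟨n, j, hj, s⟩ ⟨n, j, hj, s'⟩
  /-- The suspension relation. -/
  | suspend {n j : ℕ} (hj : (j : ℤ) = k + n) (hj' : ((j : ℤ) + 1) = k + (n + 1))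
      (s : SphereMap j (Xs.lvl n)) :
      StableRel k Xs ⟨n, j, hj, s⟩ ⟨n + 1, j + 1, by exact_mod_cast hj', suspend Xs s⟩

/-- The `k`-th stable homotopy group (as a set) of a sequential spectrum. -/
def StablePi (k : ℤ) (Xs : SeqSpectrum) : Type 1 := Quot (StableRel k Xs)

lemma push_suspend {Xs Ys : SeqSpectrum} (f : Xs ⟶ Ys) {n j : ℕ}
    (s : SphereMap j (Xs.lvl n)) :
    (suspend Xs s).push (SeqHom.app f (n + 1)) (SeqHom.app_pt f (n + 1)) =
      suspend Ys (s.push (SeqHom.app f n) (SeqHom.app_pt f n)) := by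
  apply SphereMap.ext
  funext m c
  exact SeqHom.app_bond f n m _ _

/-- The map induced on stable homotopy groups by a map of sequential spectra. -/
def stableMap {Xs Ys : SeqSpectrum} (f : Xs ⟶ Ys) (k : ℤ) : StablePi k Xs → StablePi k Ys :=
  Quot.map
    (fun e => ⟨e.n, e.j, e.hj, e.s.push (SeqHom.app f e.n) (SeqHom.app_pt f e.n)⟩)
    (by
      rintro a b (⟨hj, h⟩ | ⟨hj, hj', s⟩)
      · refine StableRel.homotopic hj ?_
        obtain ⟨H, hnat, hcoll, h0, h1⟩ := h
        refine ⟨fun m c t => (SeqHom.app f _).app m (H m c t), ?_, ?_, ?_, ?_⟩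
        · intro m m' g c t
          dsimp only
          rw [← hnat g c t]
          exact (NatTrans.naturality_apply (SeqHom.app f _) g (H m c t)).symm
        · intro m c t hc
          dsimp only
          rw [hcoll m c t hc, SeqHom.app_pt]
        · intro m c; dsimp [SphereMap.push]; rw [h0]
        · intro m c; dsimp [SphereMap.push]; rw [h1]
      · dsimp only
        rw [push_suspend]
        exact StableRel.suspend hj hj' _)

/-- A map of sequential spectra inducing isomorphisms on all stable homotopy groups
(for levelwise Kan spectra, where the combinatorial definition is correct). -/
def PiIsoOfKan {Xs Ys : SeqSpectrum} (f : Xs ⟶ Ys) : Prop :=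
  ∀ k : ℤ, Function.Bijective (stableMap f k)

/-- A `π_*`-isomorphism of sequential spectra: a map inducing isomorphisms on all stable
homotopy groups, computed after (levelwise) fibrant replacement of the levels. -/
def PiStarIso {Xs Ys : SeqSpectrum} (f : Xs ⟶ Ys) : Prop :=
  ∃ (Xs' Ys' : SeqSpectrum) (iX : Xs ⟶ Xs') (iY : Ys ⟶ Ys') (f' : Xs' ⟶ Ys'),
    LevelWE iX ∧ LevelWE iY ∧ LevelKan Xs' ∧ LevelKan Ys' ∧
    iX ≫ f' = f ≫ iY ∧ PiIsoOfKan f'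

/-! ### Symmetric spectra -/

/-- The canonical embedding `Σ_n → Σ_{n+1}` of symmetric groups, extending a permutation
by the identity on the last element. -/
noncomputable def permExtend {n : ℕ} (π : Equiv.Perm (Fin n)) : Equiv.Perm (Fin (n + 1)) :=
  π.viaFintypeEmbedding Fin.castSuccEmb

/-- The transposition of the two last elements in `Σ_{n+2}`. -/
def permTwist (n : ℕ) : Equiv.Perm (Fin (n + 2)) :=
  Equiv.swap (Fin.castSucc (Fin.last n)) (Fin.last (n + 1))

/-- A symmetric spectrum (in the sense of Hovey–Shipley–Smith, Def. 1.2.2): a sequence of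
pointed simplicial sets `X n` with an action of the symmetric group `Σ_n` on `X n`, and
equivariant bonding maps `X n ∧ S¹ → X (n+1)`.  As for `SeqSpectrum`, the bonding map is
encoded as a natural family collapsing the wedge.  Equivariance of the iterated bonding
maps `X p ∧ S^q → X (p+q)` with respect to `Σ_p × Σ_q` is imposed on generators: each
bonding map is `Σ_n`-equivariant, and the double bonding map coequalizes the twist of the
two circle coordinates against the transposition of the two new symmetric group
coordinates. -/
structure SymSpectrum : Type 1 where
  lvl : ℕ → PSSet
  bond : ∀ (n : ℕ) (m : SimplexCategoryᵒᵖ), (lvl n).X.obj m → ICoord m → (lvl (n + 1)).X.obj m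
  bond_nat : ∀ (n : ℕ) {m m'} (g : m ⟶ m') (x : (lvl n).X.obj m) (t : ICoord m),
    (lvl (n + 1)).X.map g (bond n m x t) = bond n m' ((lvl n).X.map g x) (g.unop ≫ t)
  bond_pt : ∀ n m (t : ICoord m), bond n m ((lvl n).pt m) t = (lvl (n + 1)).pt m
  bond_const : ∀ n m (x : (lvl n).X.obj m) (v : Fin 2),
    bond n m x (iconst m v) = (lvl (n + 1)).pt m
  act : ∀ n, Equiv.Perm (Fin n) → ((lvl n).X ⟶ (lvl n).X)
  act_one : ∀ n, act n 1 = 𝟙 (lvl n).X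
  act_mul : ∀ n (π ρ : Equiv.Perm (Fin n)), act n (π * ρ) = act n ρ ≫ act n π
  act_pt : ∀ n π m, (act n π).app m ((lvl n).pt m) = (lvl n).pt m
  act_bond : ∀ n (π : Equiv.Perm (Fin n)) m (x : (lvl n).X.obj m) (t : ICoord m),
    bond n m ((act n π).app m x) t = (act (n + 1) (permExtend π)).app m (bond n m x t)
  bond_twist : ∀ n m (x : (lvl n).X.obj m) (t u : ICoord m),
    bond (n + 1) m (bond n m x t) u =
      (act (n + 2) (permTwist n)).app m (bond (n + 1) m (bond n m x u) t)

/-- Morphisms of symmetric spectra: levelwise pointed maps which commute with the bonding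
maps and are equivariant for the symmetric group actions. -/
@[ext]
structure SymHom (Xs Ys : SymSpectrum) where
  app : ∀ n, (Xs.lvl n).X ⟶ (Ys.lvl n).X
  app_pt : ∀ n m, (app n).app m ((Xs.lvl n).pt m) = (Ys.lvl n).pt m
  app_bond : ∀ n m (x : (Xs.lvl n).X.obj m) (t : ICoord m),
    (app (n + 1)).app m (Xs.bond n m x t) = Ys.bond n m ((app n).app m x) t
  app_act : ∀ n (π : Equiv.Perm (Fin n)), Xs.act n π ≫ app n = app n ≫ Ys.act n π

instance : Category SymSpectrum where
  Hom := SymHom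
  id Xs := ⟨fun _ => 𝟙 _, fun _ _ => rfl, fun _ _ _ _ => rfl, fun _ _ => by simp⟩
  comp {X Y Z} f g := ⟨fun n => f.app n ≫ g.app n,
    fun n m => by
      change (g.app n).app m ((f.app n).app m _) = _
      rw [f.app_pt, g.app_pt],
    fun n m x t => by
      change (g.app (n + 1)).app m ((f.app (n + 1)).app m _) = _
      rw [f.app_bond, g.app_bond]
      rfl,
    fun n π => by rw [← Category.assoc, f.app_act, Category.assoc, g.app_act, Category.assoc]⟩
  id_comp f := by apply SymHom.ext; funext n; simp
  comp_id f := by apply SymHom.ext; funext n; simp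
  assoc f g h := by apply SymHom.ext; funext n; simp

@[simp] lemma sym_id_app (Xs : SymSpectrum) (n : ℕ) :
    SymHom.app (𝟙 Xs) n = 𝟙 (Xs.lvl n).X := rfl

@[simp] lemma sym_comp_app {Xs Ys Zs : SymSpectrum} (f : Xs ⟶ Ys) (g : Ys ⟶ Zs) (n : ℕ) :
    SymHom.app (f ≫ g) n = SymHom.app f n ≫ SymHom.app g n := rfl

/-- The underlying sequential spectrum of a symmetric spectrum. -/
def SymSpectrum.toSeq (Xs : SymSpectrum) : SeqSpectrum where
  lvl := Xs.lvl
  bond := Xs.bond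
  bond_nat := Xs.bond_nat
  bond_pt := Xs.bond_pt
  bond_const := Xs.bond_const

/-- The forgetful functor `U` from symmetric spectra to sequential spectra. -/
def Forget : SymSpectrum ⥤ SeqSpectrum where
  obj Xs := Xs.toSeq
  map f := ⟨SymHom.app f, SymHom.app_pt f, SymHom.app_bond f⟩
  map_id _ := rfl
  map_comp _ _ := rfl

/-! ### Cotensors, mapping spaces and stable equivalences of symmetric spectra -/

lemma comp_const {x y z : SimplexCategory} (f : x ⟶ y) (i : Fin (z.len + 1)) :
    f ≫ SimplexCategory.const y z i = SimplexCategory.const x z i := by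
  apply SimplexCategory.Hom.ext
  rfl

/-- The pointed cotensor `P^{A₊}` of a pointed simplicial set by a simplicial set:
in degree `m` it is the set of maps `Δ[m] × A ⟶ P`, with the constant map as
basepoint. -/
def PSSet.cotensor (P : PSSet) (A : SSet.{0}) : PSSet where
  X :=
    { obj := fun m =>
        {φ : ∀ (k : SimplexCategoryᵒᵖ), (k.unop ⟶ m.unop) × A.obj k → P.X.obj k //
          ∀ {k k'} (g : k ⟶ k') (a : k.unop ⟶ m.unop) (α : A.obj k),
            P.X.map g (φ k (a, α)) = φ k' (g.unop ≫ a, A.map g α)}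
      map := fun {m m'} g => TypeCat.ofHom fun φ => ⟨fun k p => φ.1 k (p.1 ≫ g.unop, p.2), by
        intro k k' g' a α
        dsimp only
        rw [φ.2 g' (a ≫ g.unop) α, Category.assoc]⟩
      map_id := fun m => by
        ext φ : 3
        apply Subtype.ext
        funext k p
        simp
      map_comp := fun {m m' m''} g h => by
        ext φ : 3
        apply Subtype.ext
        funext k p
        simp }
  pt m := ⟨fun k _ => P.pt k, by
    intro k k' g a α
    dsimp only
    rw [P.pt_nat]⟩
  pt_nat g := by apply Subtype.ext; rfl

/-- The cotensor of a symmetric spectrum by a simplicial set, formed levelwise. -/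
def SymSpectrum.cotensor (Xs : SymSpectrum) (A : SSet.{0}) : SymSpectrum where
  lvl n := (Xs.lvl n).cotensor A
  bond n m φ t := ⟨fun k p => Xs.bond n k (φ.1 k p) (p.1 ≫ t), by
    intro k k' g a α
    dsimp only
    rw [Xs.bond_nat, φ.2 g a α, ← Category.assoc]⟩
  bond_nat n {m m'} g φ t := by
    apply Subtype.ext
    funext k p
    exact congrArg (Xs.bond n k _) (Category.assoc _ _ _)
  bond_pt n m t := by
    apply Subtype.ext
    funext k p
    dsimp [PSSet.cotensor]
    rw [Xs.bond_pt]
  bond_const n m φ v := by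
    apply Subtype.ext
    funext k p
    dsimp [PSSet.cotensor]
    rw [comp_const, Xs.bond_const]
  act n π :=
    { app := fun m => TypeCat.ofHom fun φ => ⟨fun k p => (Xs.act n π).app k (φ.1 k p), by
        intro k k' g a α
        dsimp only
        rw [← φ.2 g a α]
        exact (NatTrans.naturality_apply (Xs.act n π) g _).symm⟩
      naturality := fun {m m'} g => by
        ext φ : 3
        apply Subtype.ext
        funext k p
        rfl }
  act_one n := by
    apply NatTrans.ext
    funext m; ext φ : 3
    apply Subtype.ext
    funext k p
    dsimp [PSSet.cotensor]
    rw [Xs.act_one]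
    rfl
  act_mul n π ρ := by
    apply NatTrans.ext
    funext m; ext φ : 3
    apply Subtype.ext
    funext k p
    dsimp [PSSet.cotensor]
    rw [Xs.act_mul]
    rfl
  act_pt n π m := by
    apply Subtype.ext
    funext k p
    exact Xs.act_pt n π k
  act_bond n π m φ t := by
    apply Subtype.ext
    funext k p
    exact Xs.act_bond n π k _ _
  bond_twist n m φ t u := by
    apply Subtype.ext
    funext k p
    exact Xs.bond_twist n k _ _ _

/-- The map `X^A ⟶ Y^A` induced on cotensors by a map of symmetric spectra. -/
def cotensorMap {Xs Ys : SymSpectrum} (f : Xs ⟶ Ys) (A : SSet.{0}) :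
    Xs.cotensor A ⟶ Ys.cotensor A where
  app n :=
    { app := fun m => TypeCat.ofHom fun φ => ⟨fun k p => (SymHom.app f n).app k (φ.1 k p), by
        intro k k' g a α
        dsimp only
        rw [← φ.2 g a α]
        exact (NatTrans.naturality_apply (SymHom.app f n) g _).symm⟩
      naturality := fun {m m'} g => by
        ext φ : 3
        apply Subtype.ext
        funext k p
        rfl }
  app_pt n m := by
    apply Subtype.ext
    funext k p
    exact SymHom.app_pt f n k
  app_bond n m φ t := by
    apply Subtype.ext
    funext k p
    exact SymHom.app_bond f n k _ _
  app_act n π := by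
    apply NatTrans.ext
    funext m; ext φ : 3
    apply Subtype.ext
    funext k p
    exact ConcreteCategory.congr_hom (NatTrans.congr_app (SymHom.app_act f n π) k) _

/-- The map `X^B ⟶ X^A` induced on cotensors by a map of simplicial sets `A ⟶ B`. -/
def cotensorPre (Xs : SymSpectrum) {A B : SSet.{0}} (h : A ⟶ B) :
    Xs.cotensor B ⟶ Xs.cotensor A where
  app n :=
    { app := fun m => TypeCat.ofHom fun φ => ⟨fun k p => φ.1 k (p.1, h.app k p.2), by
        intro k k' g a α
        dsimp only
        rw [φ.2 g a (h.app k α)]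
        exact congrArg (fun z => φ.1 k' (g.unop ≫ a, z)) (NatTrans.naturality_apply h g α).symm⟩
      naturality := fun {m m'} g => by
        ext φ : 3
        apply Subtype.ext
        funext k p
        rfl }
  app_pt n m := by apply Subtype.ext; rfl
  app_bond n m φ t := by apply Subtype.ext; rfl
  app_act n π := by
    apply NatTrans.ext
    funext m; ext φ : 3
    apply Subtype.ext
    rfl

lemma cotensorPre_id (Xs : SymSpectrum) (A : SSet.{0}) :
    cotensorPre Xs (𝟙 A) = 𝟙 (Xs.cotensor A) := by
  apply SymHom.ext
  funext n
  apply NatTrans.ext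
  funext m; ext φ : 3
  apply Subtype.ext
  rfl

lemma cotensorPre_comp (Xs : SymSpectrum) {A B C : SSet.{0}} (h : A ⟶ B) (h' : B ⟶ C) :
    cotensorPre Xs (h ≫ h') = cotensorPre Xs h' ≫ cotensorPre Xs h := by
  apply SymHom.ext
  funext n
  apply NatTrans.ext
  funext m; ext φ : 3
  apply Subtype.ext
  rfl

/-- The simplicial mapping space `Map(X, E)` of symmetric spectra:
`Map(X,E)_m = Hom(X, E^{Δ[m]})`. -/
def MapSp (Xs Es : SymSpectrum) : SSet.{0} where
  obj m := Xs ⟶ Es.cotensor (SSet.stdSimplex.obj m.unop)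
  map {m m'} g := TypeCat.ofHom fun u => u ≫ cotensorPre Es (SSet.stdSimplex.map g.unop)
  map_id m := by
    ext u : 3
    change u ≫ cotensorPre Es (SSet.stdSimplex.map (𝟙 m.unop)) = u
    erw [CategoryTheory.Functor.map_id, cotensorPre_id, Category.comp_id]
  map_comp {m m' m''} g h := by
    ext u : 3
    change u ≫ cotensorPre Es (SSet.stdSimplex.map (h.unop ≫ g.unop)) = _
    erw [CategoryTheory.Functor.map_comp, cotensorPre_comp, ← Category.assoc]
    rfl

/-- The map `Map(Y,E) ⟶ Map(X,E)` induced by precomposition with `f : X ⟶ Y`. -/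
def mapSpPre {Xs Ys : SymSpectrum} (f : Xs ⟶ Ys) (Es : SymSpectrum) :
    MapSp Ys Es ⟶ MapSp Xs Es where
  app m := TypeCat.ofHom fun u => f ≫ u
  naturality {m m'} g := by
    ext u : 3
    change f ≫ (u ≫ _) = (f ≫ u) ≫ _
    exact (Category.assoc _ _ _).symm

/-- An injective symmetric spectrum: one with the extension property along all maps
which are levelwise monomorphisms and level weak equivalences
(Hovey–Shipley–Smith, Definition 3.1.1). -/
def IsInjectiveSpectrum (Es : SymSpectrum) : Prop :=
  ∀ {As Bs : SymSpectrum} (i : As ⟶ Bs),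
    (∀ n m, Function.Injective ((SymHom.app i n).app m)) →
    (∀ n, WeakEquiv (SymHom.app i n)) →
    ∀ u : As ⟶ Es, ∃ v : Bs ⟶ Es, i ≫ v = u

/-- A symmetric spectrum whose underlying sequential spectrum is a levelwise Kan
`Ω`-spectrum. -/
def OmegaKanSym (Es : SymSpectrum) : Prop := OmegaSpectrum (Forget.obj Es)

/-- A stable equivalence of symmetric spectra: a map `f : X ⟶ Y` such that
`f^* : Map(Y,E) ⟶ Map(X,E)` is a weak equivalence of simplicial sets for every
injective `Ω`-spectrum `E`. -/
def StableEquiv {Xs Ys : SymSpectrum} (f : Xs ⟶ Ys) : Prop :=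
  ∀ Es : SymSpectrum, IsInjectiveSpectrum Es → OmegaKanSym Es → WeakEquiv (mapSpPre f Es)

/-! ### Products of symmetric spectra and the cotensor path object -/

/-- The levelwise product of pointed simplicial sets. -/
def PSSet.prod (P Q : PSSet) : PSSet where
  X :=
    { obj := fun m => P.X.obj m × Q.X.obj m
      map := fun g => TypeCat.ofHom fun p => (P.X.map g p.1, Q.X.map g p.2)
      map_id := fun m => by ext p : 3; simp
      map_comp := fun g h => by ext p : 3; simp }
  pt m := (P.pt m, Q.pt m)
  pt_nat g := Prod.ext (P.pt_nat g) (Q.pt_nat g)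

/-- The levelwise product of symmetric spectra. -/
def SymSpectrum.prod (Xs Ys : SymSpectrum) : SymSpectrum where
  lvl n := (Xs.lvl n).prod (Ys.lvl n)
  bond n m p t := (Xs.bond n m p.1 t, Ys.bond n m p.2 t)
  bond_nat n {m m'} g p t := by
    exact Prod.ext (Xs.bond_nat n g _ _) (Ys.bond_nat n g _ _)
  bond_pt n m t := by dsimp [PSSet.prod]; rw [Xs.bond_pt, Ys.bond_pt]
  bond_const n m p v := by dsimp [PSSet.prod]; rw [Xs.bond_const, Ys.bond_const]
  act n π :=
    { app := fun m => TypeCat.ofHom fun p => ((Xs.act n π).app m p.1, (Ys.act n π).app m p.2)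
      naturality := fun {m m'} g => by
        refine ConcreteCategory.hom_ext _ _ fun (p : (Xs.lvl n).X.obj m × (Ys.lvl n).X.obj m) => ?_
        have h1 := NatTrans.naturality_apply (Xs.act n π) g p.1
        have h2 := NatTrans.naturality_apply (Ys.act n π) g p.2
        exact Prod.ext h1 h2 }
  act_one n := by
    apply NatTrans.ext
    funext m; ext p : 3
    dsimp [PSSet.prod]
    rw [Xs.act_one, Ys.act_one]
    rfl
  act_mul n π ρ := by
    apply NatTrans.ext
    funext m; ext p : 3
    dsimp [PSSet.prod]
    rw [Xs.act_mul, Ys.act_mul]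
    rfl
  act_pt n π m := Prod.ext (Xs.act_pt n π m) (Ys.act_pt n π m)
  act_bond n π m p t := Prod.ext (Xs.act_bond n π m _ _) (Ys.act_bond n π m _ _)
  bond_twist n m p t u := by
    exact Prod.ext (Xs.bond_twist n m _ _ _) (Ys.bond_twist n m _ _ _)

/-- First projection from the product of symmetric spectra. -/
def prodFst {Xs Ys : SymSpectrum} : Xs.prod Ys ⟶ Xs where
  app n := { app := fun m => TypeCat.ofHom fun p => p.1, naturality := fun {m m'} g => rfl }
  app_pt n m := rfl
  app_bond n m p t := rfl
  app_act n π := rfl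

/-- Second projection from the product of symmetric spectra. -/
def prodSnd {Xs Ys : SymSpectrum} : Xs.prod Ys ⟶ Ys where
  app n := { app := fun m => TypeCat.ofHom fun p => p.2, naturality := fun {m m'} g => rfl }
  app_pt n m := rfl
  app_bond n m p t := rfl
  app_act n π := rfl

/-- Pairing of maps into the product of symmetric spectra. -/
def prodLift {Zs Xs Ys : SymSpectrum} (f : Zs ⟶ Xs) (g : Zs ⟶ Ys) : Zs ⟶ Xs.prod Ys where
  app n :=
    { app := fun m => TypeCat.ofHom fun z => ((SymHom.app f n).app m z, (SymHom.app g n).app m z)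
      naturality := fun {m m'} h => by
        refine ConcreteCategory.hom_ext _ _ fun z => ?_
        have h1 := NatTrans.naturality_apply (SymHom.app f n) h z
        have h2 := NatTrans.naturality_apply (SymHom.app g n) h z
        exact Prod.ext h1 h2 }
  app_pt n m := by
    exact Prod.ext (SymHom.app_pt f n m) (SymHom.app_pt g n m)
  app_bond n m z t := by
    exact Prod.ext (SymHom.app_bond f n m _ _) (SymHom.app_bond g n m _ _)
  app_act n π := by
    apply NatTrans.ext
    funext m; ext z : 3
    have h1 := ConcreteCategory.congr_hom (NatTrans.congr_app (SymHom.app_act f n π) m) z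
    have h2 := ConcreteCategory.congr_hom (NatTrans.congr_app (SymHom.app_act g n π) m) z
    exact Prod.ext h1 h2

noncomputable instance (Xs Ys : SymSpectrum) :
    Limits.HasLimit (Limits.pair Xs Ys) :=
  Limits.HasLimit.mk
    { cone := Limits.BinaryFan.mk (prodFst (Xs := Xs) (Ys := Ys)) prodSnd
      isLimit := Limits.BinaryFan.isLimitMk
        (fun s => prodLift s.fst s.snd)
        (fun s => by apply SymHom.ext; funext n; apply NatTrans.ext; funext m; rfl)
        (fun s => by apply SymHom.ext; funext n; apply NatTrans.ext; funext m; rfl)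
        (fun s u h1 h2 => by
          apply SymHom.ext
          funext n
          apply NatTrans.ext
          funext m
          ext z : 3
          have e1 := ConcreteCategory.congr_hom (NatTrans.congr_app
            (congrArg (fun w => SymHom.app w n) h1) m) z
          have e2 := ConcreteCategory.congr_hom (NatTrans.congr_app
            (congrArg (fun w => SymHom.app w n) h2) m) z
          exact Prod.ext e1 e2) }

noncomputable instance : Limits.HasBinaryProducts SymSpectrum :=
  Limits.hasBinaryProducts_of_hasLimit_pair _

/-- The "constant path" map `X ⟶ X^{Δ[1]}`; it is the composite of the canonical
isomorphism `X ≅ X^{Δ[0]}` with the cotensor of the unique map `Δ[1] ⟶ Δ[0]`. -/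
def pathIn (Xs : SymSpectrum) : Xs ⟶ Xs.cotensor Δ[1] where
  app n :=
    { app := fun m => TypeCat.ofHom fun x => ⟨fun k p => (Xs.lvl n).X.map p.1.op x, by
        intro k k' g a α
        dsimp only
        rw [← FunctorToTypes.map_comp_apply]
        rfl⟩
      naturality := fun {m m'} g => by
        ext x : 3
        apply Subtype.ext
        funext k p
        change (Xs.lvl n).X.map p.1.op ((Xs.lvl n).X.map g x) =
          (Xs.lvl n).X.map (p.1 ≫ g.unop).op x
        rw [← FunctorToTypes.map_comp_apply]
        rfl }
  app_pt n m := by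
    apply Subtype.ext
    funext k p
    exact (Xs.lvl n).pt_nat _
  app_bond n m x t := by
    apply Subtype.ext
    funext k p
    exact Xs.bond_nat n p.1.op x t
  app_act n π := by
    apply NatTrans.ext
    funext m; ext x : 3
    apply Subtype.ext
    funext k p
    change (Xs.lvl n).X.map p.1.op ((Xs.act n π).app m x) =
      (Xs.act n π).app k ((Xs.lvl n).X.map p.1.op x)
    exact (NatTrans.naturality_apply (Xs.act n π) p.1.op x).symm

/-- Evaluation of the path object `X^{Δ[1]}` at one of the two vertices of `Δ[1]`;
the pair of these maps is the map `X^{Δ[1]} ⟶ X^{∂Δ[1]} ≅ X × X`. -/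
def pathEv (Xs : SymSpectrum) (v : Fin 2) : Xs.cotensor Δ[1] ⟶ Xs where
  app n :=
    { app := fun m => TypeCat.ofHom fun φ => φ.1 m (𝟙 m.unop, SSet.stdSimplex.const 1 v m)
      naturality := fun {m m'} g => by
        ext φ : 3
        change φ.1 m' (𝟙 m'.unop ≫ g.unop, SSet.stdSimplex.const 1 v m') =
          (Xs.lvl n).X.map g (φ.1 m (𝟙 m.unop, SSet.stdSimplex.const 1 v m))
        rw [φ.2 g (𝟙 m.unop) (SSet.stdSimplex.const 1 v m)]
        refine congrArg (φ.1 m') (Prod.ext ?_ ?_)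
        · simp
        · rfl }
  app_pt n m := rfl
  app_bond n m φ t := by
    change Xs.bond n m (φ.1 m (𝟙 m.unop, SSet.stdSimplex.const 1 v m)) (𝟙 m.unop ≫ t) = _
    rw [Category.id_comp]
    rfl
  app_act n π := by
    apply NatTrans.ext
    funext m; ext φ : 3
    rfl

/-! ### Model structures, cofibrant generation, local presentability -/

section ModelStructures

universe w v₂ u₂ v₁ u₁

variable {C : Type u₁} [Category.{v₁} C]

/-- A class of morphisms is closed under retracts. -/
def RetractClosed (P : MorphismProperty C) : Prop :=
  ∀ {X Y X' Y' : C} (f : X ⟶ Y) (g : X' ⟶ Y') (iX : X ⟶ X') (iY : Y ⟶ Y')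
    (rX : X' ⟶ X) (rY : Y' ⟶ Y),
    iX ≫ rX = 𝟙 X → iY ≫ rY = 𝟙 Y → iX ≫ g = f ≫ iY → g ≫ rY = rX ≫ f → P g → P f

/-- A model structure on a category `C`: classes of weak equivalences, cofibrations and
fibrations satisfying the two-out-of-three, retract, lifting and factorization axioms
(the trivial (co)fibrations being the (co)fibrations which are weak equivalences). -/
structure ModelStr (C : Type u₁) [Category.{v₁} C] : Type (max u₁ v₁) where
  W : MorphismProperty C
  Cof : MorphismProperty C
  Fib : MorphismProperty C
  w_id : ∀ X : C, W (𝟙 X)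
  w_comp : ∀ {X Y Z} (f : X ⟶ Y) (g : Y ⟶ Z), W f → W g → W (f ≫ g)
  w_of_comp_left : ∀ {X Y Z} (f : X ⟶ Y) (g : Y ⟶ Z), W g → W (f ≫ g) → W f
  w_of_comp_right : ∀ {X Y Z} (f : X ⟶ Y) (g : Y ⟶ Z), W f → W (f ≫ g) → W g
  w_retract : RetractClosed W
  cof_retract : RetractClosed Cof
  fib_retract : RetractClosed Fib
  lift_trivCof_fib : ∀ {A B X Y} (i : A ⟶ B) (p : X ⟶ Y),
    Cof i → W i → Fib p → HasLiftingProperty i p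
  lift_cof_trivFib : ∀ {A B X Y} (i : A ⟶ B) (p : X ⟶ Y),
    Cof i → Fib p → W p → HasLiftingProperty i p
  fact_trivCof_fib : ∀ {X Y} (f : X ⟶ Y),
    ∃ (Z : C) (i : X ⟶ Z) (p : Z ⟶ Y), Cof i ∧ W i ∧ Fib p ∧ i ≫ p = f
  fact_cof_trivFib : ∀ {X Y} (f : X ⟶ Y),
    ∃ (Z : C) (i : X ⟶ Z) (p : Z ⟶ Y), Cof i ∧ Fib p ∧ W p ∧ i ≫ p = f

/-- An object `X` is fibrant precisely when it has the extension property along all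
trivial cofibrations (equivalently, `X → 1` is a fibration). -/
def ModelStr.FibrantObj (ms : ModelStr C) (X : C) : Prop :=
  ∀ {A B : C} (i : A ⟶ B), ms.Cof i → ms.W i → ∀ u : A ⟶ X, ∃ v : B ⟶ X, i ≫ v = u

/-- An object `X` is cofibrant precisely when it has the lifting property against all
trivial fibrations (equivalently, `0 → X` is a cofibration). -/
def ModelStr.CofibrantObj (ms : ModelStr C) (X : C) : Prop :=
  ∀ {A B : C} (p : A ⟶ B), ms.Fib p → ms.W p → ∀ u : X ⟶ B, ∃ v : X ⟶ A, v ≫ p = u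

/-- The family `K` is a set of generating trivial cofibrations for `ms`: its members are
trivial cofibrations, and a map has the right lifting property against all of them
if and only if it is a fibration. -/
def ModelStr.GeneratesTrivCof (ms : ModelStr C) {ι : Type w} {A B : ι → C}
    (K : ∀ i, A i ⟶ B i) : Prop :=
  (∀ i, ms.Cof (K i) ∧ ms.W (K i)) ∧
  ∀ {X Y : C} (f : X ⟶ Y), (∀ i, HasLiftingProperty (K i) f) ↔ ms.Fib f

/-- The family `I` is a set of generating cofibrations for `ms`: its members are
cofibrations, and a map has the right lifting property against all of them if and only
if it is a trivial fibration. -/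
def ModelStr.GeneratesCof (ms : ModelStr C) {ι : Type w} {A B : ι → C}
    (I : ∀ i, A i ⟶ B i) : Prop :=
  (∀ i, ms.Cof (I i)) ∧
  ∀ {X Y : C} (f : X ⟶ Y), (∀ i, HasLiftingProperty (I i) f) ↔ (ms.Fib f ∧ ms.W f)

/-- A model structure is cofibrantly generated if it admits a set of generating
cofibrations and a set of generating trivial cofibrations. -/
def ModelStr.IsCofibrantlyGenerated (ms : ModelStr C) : Prop :=
  (∃ (ι : Type v₁) (A B : ι → C) (I : ∀ i, A i ⟶ B i), ms.GeneratesCof I) ∧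
  (∃ (ι : Type v₁) (A B : ι → C) (K : ∀ i, A i ⟶ B i), ms.GeneratesTrivCof K)

/-- A category `J` is `κ`-filtered if every diagram in `J` of size `< κ` admits a
cocone. -/
def CardinalFiltered (κ : Cardinal.{v₁}) (J : Type v₁) [SmallCategory J] : Prop :=
  ∀ (K : Type v₁) [SmallCategory K], Cardinal.mk (Σ (a b : K), a ⟶ b) < κ →
    ∀ D : K ⥤ J, Nonempty (Limits.Cocone D)

/-- An object `X` is `κ`-presentable if its covariant hom-functor preserves colimits of
`κ`-filtered diagrams. -/
def IsPresentableObj (κ : Cardinal.{v₁}) (X : C) : Prop :=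
  ∀ (J : Type v₁) (instJ : SmallCategory J), @CardinalFiltered κ J instJ →
    ∀ (D : @CategoryTheory.Functor J instJ C _) (c : Limits.Cocone D),
      Nonempty (Limits.IsColimit c) →
      Nonempty (Limits.IsColimit ((coyoneda.obj (op X)).mapCocone c))

/-- A presentation of an object `X` as a `κ`-filtered colimit of objects from a family
`G` of generators. -/
structure FilteredColimPresentation (κ : Cardinal.{v₁}) {ι : Type v₁} (G : ι → C)
    (X : C) : Type (max u₁ (v₁ + 1)) where
  J : Type v₁
  [instJ : SmallCategory J]
  filtered : CardinalFiltered κ J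
  D : J ⥤ C
  inGens : ∀ j : J, ∃ i, Nonempty (D.obj j ≅ G i)
  c : Limits.Cocone D
  isColim : Limits.IsColimit c
  iso : c.pt ≅ X

attribute [instance] FilteredColimPresentation.instJ

/-- A category is locally presentable if it is complete and cocomplete and there is a
regular cardinal `κ` and a set of `κ`-presentable objects such that every object is a
`κ`-filtered colimit of objects from this set. -/
def LocallyPresentable (C : Type u₁) [Category.{v₁} C] : Prop :=
  Limits.HasLimitsOfSize.{v₁, v₁} C ∧ Limits.HasColimitsOfSize.{v₁, v₁} C ∧
  ∃ (κ : Cardinal.{v₁}), κ.IsRegular ∧ ∃ (ι : Type v₁) (G : ι → C),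
    (∀ i, IsPresentableObj κ (G i)) ∧
    ∀ X : C, Nonempty (FilteredColimPresentation κ G X)

/-- A combinatorial model category: a cofibrantly generated model structure on a locally
presentable category. -/
def ModelStr.IsCombinatorial (ms : ModelStr C) : Prop :=
  LocallyPresentable C ∧ ms.IsCofibrantlyGenerated

end ModelStructures

section Transfer

universe w v₂ u₂ v₁ u₁

variable {M : Type u₁} [Category.{v₁} M] {C : Type u₂} [Category.{v₂} C]

/-- Membership in `cof(F K)`, the left class of the weak factorization system on `C`
generated by the image under `F` of the family `K` (equivalently, the closure of `F K`
under pushouts, transfinite composition and retracts): a map is in `cof(F K)` iff it has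
the left lifting property against every map having the right lifting property against
all `F (K i)`. -/
def CofOfImage (F : M ⥤ C) {ι : Type w} {A B : ι → M} (K : ∀ i, A i ⟶ B i)
    {X Y : C} (f : X ⟶ Y) : Prop :=
  ∀ {P Q : C} (g : P ⟶ Q), (∀ i, HasLiftingProperty (F.map (K i)) g) →
    HasLiftingProperty f g

/-- Condition (1) of the fibrant transfer theorem [fibrantMS, Theorem 3.5] for an
adjunction `F ⊣ U` with `U : C ⥤ M`: every map `f` with `U f` a trivial fibration embeds
into a commutative square whose vertical maps lie in `cof(F K)`, whose lower corners are
sent by `U` to fibrant objects, and whose bottom map is sent by `U` to a weak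
equivalence. -/
def TransferCondOne (ms : ModelStr M) (F : M ⥤ C) (U : C ⥤ M)
    {ι : Type w} {A B : ι → M} (K : ∀ i, A i ⟶ B i) : Prop :=
  ∀ {X Y : C} (f : X ⟶ Y), ms.Fib (U.map f) → ms.W (U.map f) →
    ∃ (X' Y' : C) (iX : X ⟶ X') (iY : Y ⟶ Y') (f' : X' ⟶ Y'),
      CofOfImage F K iX ∧ CofOfImage F K iY ∧
      ms.FibrantObj (U.obj X') ∧ ms.FibrantObj (U.obj Y') ∧
      iX ≫ f' = f ≫ iY ∧ ms.W (U.map f')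

/-- Condition (2) of the fibrant transfer theorem [fibrantMS, Theorem 3.5]: every object
`X` with `U X` fibrant admits a path object, i.e. a factorization `X → Path X → X × X` of
the diagonal whose first map is sent by `U` to a weak equivalence and whose second map is
sent by `U` to a fibration. -/
def TransferCondTwo [Limits.HasBinaryProducts C] (ms : ModelStr M) (U : C ⥤ M) : Prop :=
  ∀ X : C, ms.FibrantObj (U.obj X) →
    ∃ (P : C) (w : X ⟶ P) (p : P ⟶ Limits.prod X X),
      w ≫ p = Limits.prod.lift (𝟙 X) (𝟙 X) ∧ ms.W (U.map w) ∧ ms.Fib (U.map p)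

/-- A model structure `msD` is (fibrantly) transferred from `msC` along a right adjoint
`R` when its weak equivalences and fibrations are detected by `R`. -/
def IsRightTransferred {D : Type u₁} [Category.{v₁} D] {C' : Type u₂} [Category.{v₂} C']
    (msD : ModelStr D) (msC : ModelStr C') (R : D ⥤ C') : Prop :=
  (∀ {X Y : D} (f : X ⟶ Y), msD.W f ↔ msC.W (R.map f)) ∧
  (∀ {X Y : D} (f : X ⟶ Y), msD.Fib f ↔ msC.Fib (R.map f))

/-- A Quillen adjunction: the left adjoint preserves cofibrations and trivial
cofibrations. -/
def IsQuillenAdjunction (msM : ModelStr M) (msC : ModelStr C) (F : M ⥤ C) (U : C ⥤ M)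
    (_ : F ⊣ U) : Prop :=
  (∀ {X Y : M} (f : X ⟶ Y), msM.Cof f → msC.Cof (F.map f)) ∧
  (∀ {X Y : M} (f : X ⟶ Y), msM.Cof f → msM.W f → msC.Cof (F.map f) ∧ msC.W (F.map f))

/-- A Quillen equivalence: a Quillen adjunction such that for `X` cofibrant and `Y`
fibrant, a map `F X ⟶ Y` is a weak equivalence iff its adjoint `X ⟶ U Y` is. -/
def IsQuillenEquivalence (msM : ModelStr M) (msC : ModelStr C) (F : M ⥤ C) (U : C ⥤ M)
    (adj : F ⊣ U) : Prop :=
  IsQuillenAdjunction msM msC F U adj ∧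
  ∀ (X : M) (Y : C), msM.CofibrantObj X → msC.FibrantObj Y →
    ∀ g : F.obj X ⟶ Y, (msC.W g ↔ msM.W ((adj.homEquiv X Y) g))

end Transfer

/-! ### Characterizations of the specific model structures on spectra -/

/-- `ms` is the level model structure on sequential spectra: weak equivalences,
fibrations and trivial fibrations are defined levelwise. -/
def IsLevelSeq (ms : ModelStr SeqSpectrum) : Prop :=
  (∀ {X Y : SeqSpectrum} (f : X ⟶ Y), ms.W f ↔ LevelWE f) ∧
  (∀ {X Y : SeqSpectrum} (f : X ⟶ Y), ms.Fib f ↔ LevelFib f) ∧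
  (∀ {X Y : SeqSpectrum} (f : X ⟶ Y), (ms.Fib f ∧ ms.W f) ↔ LevelTrivFib f)

/-- `ms` is the level model structure on symmetric spectra. -/
def IsLevelSym (ms : ModelStr SymSpectrum) : Prop :=
  (∀ {X Y : SymSpectrum} (f : X ⟶ Y), ms.W f ↔ LevelWE (Forget.map f)) ∧
  (∀ {X Y : SymSpectrum} (f : X ⟶ Y), ms.Fib f ↔ LevelFib (Forget.map f)) ∧
  (∀ {X Y : SymSpectrum} (f : X ⟶ Y), (ms.Fib f ∧ ms.W f) ↔ LevelTrivFib (Forget.map f))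

/-- `ms` is the stable (Bousfield–Friedlander) model structure on sequential spectra:
weak equivalences are the `π_*`-isomorphisms, fibrant objects are the levelwise Kan
`Ω`-spectra, and trivial fibrations are the level trivial fibrations. -/
def IsStableSeq (ms : ModelStr SeqSpectrum) : Prop :=
  (∀ {X Y : SeqSpectrum} (f : X ⟶ Y), ms.W f ↔ PiStarIso f) ∧
  (∀ X : SeqSpectrum, ms.FibrantObj X ↔ OmegaSpectrum X) ∧
  (∀ {X Y : SeqSpectrum} (f : X ⟶ Y), (ms.Fib f ∧ ms.W f) ↔ LevelTrivFib f)

/-- `ms` is the stable (Hovey–Shipley–Smith) model structure on symmetric spectra: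
weak equivalences are the stable equivalences, fibrant objects are the symmetric spectra
whose underlying sequential spectra are levelwise Kan `Ω`-spectra, and trivial fibrations
are the level trivial fibrations. -/
def IsStableSym (ms : ModelStr SymSpectrum) : Prop :=
  (∀ {X Y : SymSpectrum} (f : X ⟶ Y), ms.W f ↔ StableEquiv f) ∧
  (∀ X : SymSpectrum, ms.FibrantObj X ↔ OmegaKanSym X) ∧
  (∀ {X Y : SymSpectrum} (f : X ⟶ Y), (ms.Fib f ∧ ms.W f) ↔ LevelTrivFib (Forget.map f))

/-! ### Spectra of topological spaces -/

/-- A sequential spectrum of (pointed) topological spaces: a sequence of pointed spaces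
with bonding maps `X n ∧ S¹ → X (n+1)`, encoded as continuous maps
`X n × [0,1] → X (n+1)` collapsing `X n × {0,1} ∪ {pt} × [0,1]` to the basepoint
(`S¹ = [0,1]/{0,1}`). -/
structure TopSeqSpectrum : Type 1 where
  lvl : ℕ → TopCat.{0}
  pt : ∀ n, lvl n
  bond : ∀ n, C(↥(lvl n) × ↥unitInterval, ↥(lvl (n + 1)))
  bond_zero : ∀ n (x : lvl n), bond n (x, 0) = pt (n + 1)
  bond_one : ∀ n (x : lvl n), bond n (x, 1) = pt (n + 1)
  bond_pt : ∀ n (t : unitInterval), bond n (pt n, t) = pt (n + 1)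

/-- Morphisms of topological sequential spectra. -/
@[ext]
structure TopSeqHom (Xs Ys : TopSeqSpectrum) where
  app : ∀ n, Xs.lvl n ⟶ Ys.lvl n
  app_pt : ∀ n, app n (Xs.pt n) = Ys.pt n
  app_bond : ∀ n (x : Xs.lvl n) (t : unitInterval),
    app (n + 1) (Xs.bond n (x, t)) = Ys.bond n (app n x, t)

instance : Category TopSeqSpectrum where
  Hom := TopSeqHom
  id Xs := ⟨fun _ => 𝟙 _, fun _ => rfl, fun _ _ _ => rfl⟩
  comp {X Y Z} f g := ⟨fun n => f.app n ≫ g.app n,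
    fun n => by
      change g.app n (f.app n _) = _
      rw [f.app_pt, g.app_pt],
    fun n x t => by
      change g.app (n + 1) (f.app (n + 1) _) = _
      rw [f.app_bond, g.app_bond]
      rfl⟩
  id_comp f := by apply TopSeqHom.ext; funext n; simp
  comp_id f := by apply TopSeqHom.ext; funext n; simp
  assoc f g h := by apply TopSeqHom.ext; funext n; simp

/-- A symmetric spectrum of topological spaces: levels carry symmetric group actions and
the bonding maps are suitably equivariant (as in `SymSpectrum`, equivariance of the
iterated bonding maps is imposed on generators). -/
structure TopSymSpectrum : Type 1 where
  lvl : ℕ → TopCat.{0}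
  pt : ∀ n, lvl n
  bond : ∀ n, C(↥(lvl n) × ↥unitInterval, ↥(lvl (n + 1)))
  bond_zero : ∀ n (x : lvl n), bond n (x, 0) = pt (n + 1)
  bond_one : ∀ n (x : lvl n), bond n (x, 1) = pt (n + 1)
  bond_pt : ∀ n (t : unitInterval), bond n (pt n, t) = pt (n + 1)
  act : ∀ n, Equiv.Perm (Fin n) → (lvl n ⟶ lvl n)
  act_one : ∀ n, act n 1 = 𝟙 (lvl n)
  act_mul : ∀ n (π ρ : Equiv.Perm (Fin n)), act n (π * ρ) = act n ρ ≫ act n π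
  act_pt : ∀ n π, act n π (pt n) = pt n
  act_bond : ∀ n (π : Equiv.Perm (Fin n)) (x : lvl n) (t : unitInterval),
    bond n (act n π x, t) = act (n + 1) (permExtend π) (bond n (x, t))
  bond_twist : ∀ n (x : lvl n) (t u : unitInterval),
    bond (n + 1) (bond n (x, t), u) =
      act (n + 2) (permTwist n) (bond (n + 1) (bond n (x, u), t))

/-- Morphisms of topological symmetric spectra. -/
@[ext]
structure TopSymHom (Xs Ys : TopSymSpectrum) where
  app : ∀ n, Xs.lvl n ⟶ Ys.lvl n
  app_pt : ∀ n, app n (Xs.pt n) = Ys.pt n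
  app_bond : ∀ n (x : Xs.lvl n) (t : unitInterval),
    app (n + 1) (Xs.bond n (x, t)) = Ys.bond n (app n x, t)
  app_act : ∀ n (π : Equiv.Perm (Fin n)) (x : Xs.lvl n),
    app n (Xs.act n π x) = Ys.act n π (app n x)

instance : Category TopSymSpectrum where
  Hom := TopSymHom
  id Xs := ⟨fun _ => 𝟙 _, fun _ => rfl, fun _ _ _ => rfl, fun _ _ _ => rfl⟩
  comp {X Y Z} f g := ⟨fun n => f.app n ≫ g.app n,
    fun n => by
      change g.app n (f.app n _) = _
      rw [f.app_pt, g.app_pt],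
    fun n x t => by
      change g.app (n + 1) (f.app (n + 1) _) = _
      rw [f.app_bond, g.app_bond]
      rfl,
    fun n π x => by
      change g.app n (f.app n _) = _
      rw [f.app_act, g.app_act]
      rfl⟩
  id_comp f := by apply TopSymHom.ext; funext n; simp
  comp_id f := by apply TopSymHom.ext; funext n; simp
  assoc f g h := by apply TopSymHom.ext; funext n; simp

/-- The underlying topological sequential spectrum of a topological symmetric
spectrum. -/
def TopForget : TopSymSpectrum ⥤ TopSeqSpectrum where
  obj Xs := ⟨Xs.lvl, Xs.pt, Xs.bond, Xs.bond_zero, Xs.bond_one, Xs.bond_pt⟩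
  map f := ⟨f.app, f.app_pt, f.app_bond⟩
  map_id _ := rfl
  map_comp _ _ := rfl

/-- A functor from topological sequential spectra to simplicial sequential spectra "is
the levelwise singular simplicial set functor": its value on each level is the singular
simplicial set of that level. -/
def IsLevelwiseSingularSeq (R : TopSeqSpectrum ⥤ SeqSpectrum) : Prop :=
  ∃ hobj : ∀ (A : TopSeqSpectrum) (n : ℕ),
      ((R.obj A).lvl n).X = TopCat.toSSet.obj (A.lvl n),
    ∀ {A B : TopSeqSpectrum} (f : A ⟶ B) (n : ℕ),
      SeqHom.app (R.map f) n =
        eqToHom (hobj A n) ≫ TopCat.toSSet.map (TopSeqHom.app f n) ≫ eqToHom (hobj B n).symm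

/-- As `IsLevelwiseSingularSeq`, for symmetric spectra. -/
def IsLevelwiseSingularSym (R : TopSymSpectrum ⥤ SymSpectrum) : Prop :=
  ∃ hobj : ∀ (A : TopSymSpectrum) (n : ℕ),
      ((R.obj A).lvl n).X = TopCat.toSSet.obj (A.lvl n),
    ∀ {A B : TopSymSpectrum} (f : A ⟶ B) (n : ℕ),
      SymHom.app (R.map f) n =
        eqToHom (hobj A n) ≫ TopCat.toSSet.map (TopSymHom.app f n) ≫ eqToHom (hobj B n).symm

/-- A functor is "levelwise geometric realization" if it is left adjoint to a levelwise
singular functor; the realization functor on spectra is levelwise `|−|` precisely in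
this sense. -/
def IsLevelwiseRealizationSeq (L : SeqSpectrum ⥤ TopSeqSpectrum) : Prop :=
  ∃ R : TopSeqSpectrum ⥤ SeqSpectrum, IsLevelwiseSingularSeq R ∧ Nonempty (L ⊣ R)

/-! ### Cotensor of sequential spectra -/

/-- The cotensor of a sequential spectrum by a simplicial set, formed levelwise. -/
def SeqSpectrum.cotensor (Xs : SeqSpectrum) (A : SSet.{0}) : SeqSpectrum where
  lvl n := (Xs.lvl n).cotensor A
  bond n m φ t := ⟨fun k p => Xs.bond n k (φ.1 k p) (p.1 ≫ t), by
    intro k k' g a α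
    dsimp only
    rw [Xs.bond_nat, φ.2 g a α, ← Category.assoc]⟩
  bond_nat n {m m'} g φ t := by
    apply Subtype.ext
    funext k p
    exact congrArg (Xs.bond n k _) (Category.assoc _ _ _)
  bond_pt n m t := by
    apply Subtype.ext
    funext k p
    dsimp [PSSet.cotensor]
    rw [Xs.bond_pt]
  bond_const n m φ v := by
    apply Subtype.ext
    funext k p
    dsimp [PSSet.cotensor]
    rw [comp_const, Xs.bond_const]

/-- The map `X^A ⟶ Y^A` induced on cotensors by a map of sequential spectra. -/
def cotensorMapSeq {Xs Ys : SeqSpectrum} (f : Xs ⟶ Ys) (A : SSet.{0}) :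
    Xs.cotensor A ⟶ Ys.cotensor A where
  app n :=
    { app := fun m => TypeCat.ofHom fun φ => ⟨fun k p => (SeqHom.app f n).app k (φ.1 k p), by
        intro k k' g a α
        dsimp only
        rw [← φ.2 g a α]
        exact (NatTrans.naturality_apply (SeqHom.app f n) g _).symm⟩
      naturality := fun {m m'} g => by
        ext φ : 3
        apply Subtype.ext
        funext k p
        rfl }
  app_pt n m := by
    apply Subtype.ext
    funext k p
    exact SeqHom.app_pt f n k
  app_bond n m φ t := by
    apply Subtype.ext
    funext k p
    exact SeqHom.app_bond f n k _ _

/-- The map `X^B ⟶ X^A` induced on cotensors of sequential spectra by a map of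
simplicial sets `A ⟶ B`. -/
def cotensorPreSeq (Xs : SeqSpectrum) {A B : SSet.{0}} (h : A ⟶ B) :
    Xs.cotensor B ⟶ Xs.cotensor A where
  app n :=
    { app := fun m => TypeCat.ofHom fun φ => ⟨fun k p => φ.1 k (p.1, h.app k p.2), by
        intro k k' g a α
        dsimp only
        rw [φ.2 g a (h.app k α)]
        exact congrArg (fun z => φ.1 k' (g.unop ≫ a, z)) (NatTrans.naturality_apply h g α).symm⟩
      naturality := fun {m m'} g => by
        ext φ : 3
        apply Subtype.ext
        funext k p
        rfl }
  app_pt n m := by apply Subtype.ext; rfl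
  app_bond n m φ t := by apply Subtype.ext; rfl

end SpectraFormal

/-!
Map `X` levelwise injectively into a symmetric spectrum `E` whose map to the terminal spectrum
is a level trivial fibration. For `E` take the product over `l` of the right adjoints of
evaluation at level `l`, applied to the cofree simplicial sets on the graded sets underlying the
levels of `X`; the cofree simplicial sets make every boundary inclusion `∂Δ[r] → Δ[r]` extend.
A level trivial fibration is a stable fibration, so by adjunction it has the right lifting
property against `F K`, hence against `f`, and a lift in the square from `f` to `E → *`
factors the injection `X → E` through `f`.
-/

lemma Fin.exists_castLE_eq_or_le {a b : ℕ} (h : a ≤ b) (i : Fin b) :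
    (∃ j : Fin a, Fin.castLE h j = i) ∨ a ≤ (i : ℕ) := by
  by_cases hi : (i : ℕ) < a
  · exact Or.inl ⟨⟨i, hi⟩, rfl⟩
  · exact Or.inr (not_lt.mp hi)

lemma Function.update_comp_swap {α : Type*} (c : ℕ → α) {n i : ℕ} (s : α) (hn : n < i) :
    Function.update c n s ∘ Equiv.swap i (i + 1) =
      Function.update (c ∘ Equiv.swap i (i + 1)) n s := by
  funext j
  simp only [Function.comp_apply, Function.update_apply, Equiv.swap_apply_def]
  split_ifs <;> first | rfl | omega

namespace SpectraFormal

theorem CofOfImage.hasLiftingProperty {M C : Type*} [Category M] [Category C] {ms : ModelStr M}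
    {F : M ⥤ C} {U : C ⥤ M} (adj : F ⊣ U) {ι : Type*} {A B : ι → M} {K : ∀ i, A i ⟶ B i}
    (hK : ∀ i, ms.Cof (K i) ∧ ms.W (K i)) {X Y : C} {f : X ⟶ Y} (hf : CofOfImage F K f)
    {P Q : C} {g : P ⟶ Q} (hg : ms.Fib (U.map g)) : HasLiftingProperty f g :=
  hf g fun i => (adj.hasLiftingProperty_iff _ _).mpr (ms.lift_trivCof_fib _ _ (hK i).1 (hK i).2 hg)

noncomputable def permCastLE {a b : ℕ} (h : a ≤ b) : Equiv.Perm (Fin a) →* Equiv.Perm (Fin b) :=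
  Equiv.Perm.viaEmbeddingHom (Fin.castLEEmb h)

section permCastLE

variable {a b c : ℕ}

@[simp]
lemma permCastLE_apply_castLE (h : a ≤ b) (π : Equiv.Perm (Fin a)) (i : Fin a) :
    permCastLE h π (Fin.castLE h i) = Fin.castLE h (π i) :=
  Equiv.Perm.viaEmbedding_apply π (Fin.castLEEmb h) i

lemma permCastLE_apply_of_le (h : a ≤ b) (π : Equiv.Perm (Fin a)) {i : Fin b}
    (hi : a ≤ (i : ℕ)) : permCastLE h π i = i := by
  refine Equiv.Perm.viaEmbedding_apply_of_notMem π _ i ?_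
  rintro ⟨j, rfl⟩
  exact absurd hi (not_le.mpr j.2)

lemma permCastLE_refl (π : Equiv.Perm (Fin a)) : permCastLE le_rfl π = π := by
  ext i
  simpa using congrArg Fin.val (permCastLE_apply_castLE le_rfl π i)

lemma permCastLE_permCastLE (h₁ : a ≤ b) (h₂ : b ≤ c) (π : Equiv.Perm (Fin a)) :
    permCastLE h₂ (permCastLE h₁ π) = permCastLE (h₁.trans h₂) π := by
  ext i
  rcases Fin.exists_castLE_eq_or_le (h₁.trans h₂) i with ⟨j, rfl⟩ | hi
  · rw [permCastLE_apply_castLE, ← Fin.castLE_castLE h₁ h₂ j, permCastLE_apply_castLE,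
      permCastLE_apply_castLE, Fin.castLE_castLE]
  rcases Fin.exists_castLE_eq_or_le h₂ i with ⟨j, rfl⟩ | hi'
  · rw [permCastLE_apply_castLE, permCastLE_apply_of_le h₁ _ (by simpa using hi),
      permCastLE_apply_of_le _ _ hi]
  · rw [permCastLE_apply_of_le _ _ hi', permCastLE_apply_of_le _ _ hi]

lemma permExtend_eq_permCastLE (π : Equiv.Perm (Fin a)) :
    permExtend π = permCastLE a.le_succ π := by
  ext i
  induction i using Fin.lastCases with
  | last =>
    rw [permCastLE_apply_of_le _ _ (by simp), permExtend,
      Equiv.Perm.viaFintypeEmbedding_apply_notMem_range]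
    rintro ⟨j, hj⟩
    exact Fin.castSucc_ne_last j hj
  | cast j =>
    have := Equiv.Perm.viaFintypeEmbedding_apply_image π Fin.castSuccEmb j
    simp only [Fin.coe_castSuccEmb] at this
    rw [permExtend, this, show j.castSucc = Fin.castLE a.le_succ j from rfl,
      permCastLE_apply_castLE]
    rfl

lemma permCastLE_swap (h : a ≤ b) (u v : Fin a) :
    permCastLE h (Equiv.swap u v) = Equiv.swap (Fin.castLE h u) (Fin.castLE h v) := by
  ext i
  rcases Fin.exists_castLE_eq_or_le h i with ⟨j, rfl⟩ | hi
  · rw [permCastLE_apply_castLE, (Fin.castLE_injective h).swap_apply]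
  · have hne : ∀ w : Fin a, i ≠ Fin.castLE h w := fun w hw => by
      have := w.2
      rw [hw, Fin.val_castLE] at hi
      omega
    rw [permCastLE_apply_of_le h _ hi, Equiv.swap_apply_of_ne_of_ne (hne u) (hne v)]

lemma permCastLE_permTwist {n l : ℕ} (h : n + 2 ≤ l) :
    permCastLE h (permTwist n) = Equiv.swap (⟨n, by omega⟩ : Fin l) ⟨n + 1, by omega⟩ := by
  rw [permTwist, permCastLE_swap]
  rfl

lemma commute_permCastLE_swap (h : a ≤ b) (π : Equiv.Perm (Fin a)) {u v : Fin b}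
    (hu : a ≤ (u : ℕ)) (hv : a ≤ (v : ℕ)) : Commute (permCastLE h π) (Equiv.swap u v) := by
  refine Equiv.Perm.Disjoint.commute fun i => ?_
  rcases Fin.exists_castLE_eq_or_le h i with ⟨j, rfl⟩ | hi
  · have hne : ∀ w : Fin b, a ≤ (w : ℕ) → Fin.castLE h j ≠ w := fun w hw hj => by
      have := j.2
      rw [← hj, Fin.val_castLE] at hw
      omega
    exact Or.inr (Equiv.swap_apply_of_ne_of_ne (hne u hu) (hne v hv))
  · exact Or.inl (permCastLE_apply_of_le h π hi)

end permCastLE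

def HasConstCoord {k : SimplexCategoryᵒᵖ} (n l : ℕ) (c : ℕ → ICoord k) : Prop :=
  ∃ (i : ℕ) (v : Fin 2), n ≤ i ∧ i < l ∧ c i = iconst k v

namespace SymSpectrum

variable (Xs : SymSpectrum) {k : SimplexCategoryᵒᵖ}

lemma act_mul_apply {n : ℕ} (π ρ : Equiv.Perm (Fin n))
    {m : SimplexCategoryᵒᵖ} (x : (Xs.lvl n).X.obj m) :
    (Xs.act n (π * ρ)).app m x = (Xs.act n π).app m ((Xs.act n ρ).app m x) := by
  rw [Xs.act_mul]
  rfl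

/-- The iterated bonding map `X n → X l`, smashing with the circle coordinates
`c n, …, c (l - 1)` of the cube `c`. -/
noncomputable def iterBond (c : ℕ → ICoord k) {n : ℕ} (x : (Xs.lvl n).X.obj k) {l : ℕ}
    (h : n ≤ l) : (Xs.lvl l).X.obj k :=
  Nat.leRec (motive := fun l _ => (Xs.lvl l).X.obj k) x (fun l _ y => Xs.bond l k y (c l)) h

variable {Xs} (c : ℕ → ICoord k) {n : ℕ} (x : (Xs.lvl n).X.obj k)

@[simp]
lemma iterBond_refl : Xs.iterBond c x le_rfl = x :=
  Nat.leRec_self _ _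

lemma iterBond_succ {l : ℕ} (h : n ≤ l) (h' : n ≤ l + 1) :
    Xs.iterBond c x h' = Xs.bond l k (Xs.iterBond c x h) (c l) :=
  Nat.leRec_succ _ _ h

lemma iterBond_pt {l : ℕ} (h : n ≤ l) : Xs.iterBond c ((Xs.lvl n).pt k) h = (Xs.lvl l).pt k := by
  induction l, h using Nat.le_induction with
  | base => simp
  | succ l h ih => rw [iterBond_succ _ _ h, ih, Xs.bond_pt]

lemma iterBond_of_hasConstCoord {l : ℕ} (h : n ≤ l) (hc : HasConstCoord n l c) :
    Xs.iterBond c x h = (Xs.lvl l).pt k := by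
  induction l, h using Nat.le_induction with
  | base =>
    obtain ⟨i, v, hni, hil, -⟩ := hc
    omega
  | succ l h ih =>
    obtain ⟨i, v, hni, hil, hci⟩ := hc
    rw [iterBond_succ _ _ h]
    by_cases hi : i = l
    · rw [hi] at hci
      rw [hci, Xs.bond_const]
    · rw [ih ⟨i, v, hni, by omega, hci⟩, Xs.bond_pt]

lemma iterBond_congr {c' : ℕ → ICoord k} {l : ℕ} (h : n ≤ l)
    (hc : ∀ i, n ≤ i → i < l → c i = c' i) : Xs.iterBond c x h = Xs.iterBond c' x h := by
  induction l, h using Nat.le_induction with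
  | base => simp
  | succ l h ih =>
    rw [iterBond_succ _ _ h, iterBond_succ _ _ h, ih fun i hni hil => hc i hni (by omega),
      hc l h (by omega)]

lemma iterBond_act {l : ℕ} (h : n ≤ l) (π : Equiv.Perm (Fin n)) :
    Xs.iterBond c ((Xs.act n π).app k x) h =
      (Xs.act l (permCastLE h π)).app k (Xs.iterBond c x h) := by
  induction l, h using Nat.le_induction with
  | base => simp [permCastLE_refl]
  | succ l h ih =>
    rw [iterBond_succ _ _ h, iterBond_succ _ _ h, ih, Xs.act_bond, permExtend_eq_permCastLE,
      permCastLE_permCastLE]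

lemma iterBond_update {l : ℕ} (h : n + 1 ≤ l) (s : ICoord k) :
    Xs.iterBond (Function.update c n s) x (Nat.le_of_succ_le h) =
      Xs.iterBond c (Xs.bond n k x s) h := by
  induction l, h using Nat.le_induction with
  | base => rw [iterBond_succ _ _ le_rfl]; simp
  | succ l h ih =>
    rw [iterBond_succ _ _ (Nat.le_of_succ_le h), iterBond_succ _ _ h, ih,
      Function.update_of_ne (by omega)]

lemma iterBond_swap {l : ℕ} (h : n ≤ l) {i : ℕ} (hni : n ≤ i) (hil : i + 1 < l) :
    Xs.iterBond (c ∘ Equiv.swap i (i + 1)) x h =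
      (Xs.act l (Equiv.swap ⟨i, by omega⟩ ⟨i + 1, hil⟩)).app k (Xs.iterBond c x h) := by
  induction l, h using Nat.le_induction with
  | base => omega
  | succ l h ih =>
    by_cases hl : i + 1 = l
    · -- the swapped coordinates are the last two, where this is `bond_twist`
      subst hl
      have hn : n ≤ i := hni
      have hc : ∀ j, n ≤ j → j < i → (c ∘ Equiv.swap i (i + 1)) j = c j := fun j _ hj => by
        simp [Equiv.swap_apply_of_ne_of_ne (show j ≠ i by omega) (show j ≠ i + 1 by omega)]
      simp only [iterBond_succ _ _ h, iterBond_succ _ _ hn, iterBond_congr _ _ hn hc,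
        Function.comp_apply, Equiv.swap_apply_left, Equiv.swap_apply_right]
      rw [Xs.bond_twist, permTwist, ← permCastLE_refl (Equiv.swap _ _), permCastLE_swap]
      rfl
    · rw [iterBond_succ _ _ h, iterBond_succ _ _ h, ih (by omega), Xs.act_bond,
        permExtend_eq_permCastLE, permCastLE_swap, Function.comp_apply,
        Equiv.swap_apply_of_ne_of_ne (by omega) (by omega)]
      rfl

end SymSpectrum

/-- An `m`-simplex of level `n` of the cofree spectrum on `Xs`: for all `l ≥ n`, a family of
simplices of `Xs.lvl l` indexed by the simplices `a` of `Δ[m]`, the points `c n, …, c (l - 1)`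
of `S^(l - n)` and `ρ ∈ Σ_l`, compatible with the collapse of the fat wedge and with the action
of `Σ_(l - n)`. No naturality in `a` is asked for. -/
@[ext]
structure CofreeSimplex (Xs : SymSpectrum) (n : ℕ) (m : SimplexCategoryᵒᵖ) where
  val : ∀ l, n ≤ l → ∀ k : SimplexCategoryᵒᵖ, (k.unop ⟶ m.unop) → (ℕ → ICoord k) →
    Equiv.Perm (Fin l) → (Xs.lvl l).X.obj k
  collapse : ∀ l hl k a c ρ, HasConstCoord n l c → val l hl k a c ρ = (Xs.lvl l).pt k
  swap : ∀ l hl k a c ρ i (hni : n ≤ i) (hil : i + 1 < l),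
    val l hl k a (c ∘ Equiv.swap i (i + 1)) ρ =
      val l hl k a c (ρ * Equiv.swap ⟨i, by omega⟩ ⟨i + 1, hil⟩)

def cofreeLevel (Xs : SymSpectrum) (n : ℕ) : PSSet where
  X :=
    { obj := CofreeSimplex Xs n
      map := fun g => TypeCat.ofHom fun Φ =>
        { val := fun l hl k a => Φ.val l hl k (a ≫ g.unop)
          collapse := fun l hl k a => Φ.collapse l hl k (a ≫ g.unop)
          swap := fun l hl k a => Φ.swap l hl k (a ≫ g.unop) } }
  pt _ :=
    { val := fun l _ k _ _ _ => (Xs.lvl l).pt k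
      collapse := fun _ _ _ _ _ _ _ => rfl
      swap := fun _ _ _ _ _ _ _ _ _ => rfl }
  pt_nat _ := rfl

noncomputable def cofreeSpec (Xs : SymSpectrum) : SymSpectrum where
  lvl := cofreeLevel Xs
  bond n m Φ t :=
    { val := fun l hl k a c => Φ.val l (Nat.le_of_succ_le hl) k a (Function.update c n (a ≫ t))
      collapse := fun l hl k a c ρ ⟨i, v, hni, hil, hci⟩ =>
        Φ.collapse l _ k a _ ρ ⟨i, v, by omega, hil, by rwa [Function.update_of_ne (by omega)]⟩
      swap := fun l hl k a c ρ i hni hil => by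
        rw [← Function.update_comp_swap _ _ hni]
        exact Φ.swap l _ k a _ ρ i (by omega) hil }
  bond_nat n _ _ g Φ t := by
    apply CofreeSimplex.ext
    funext l hl k a c ρ
    show Φ.val l _ k (a ≫ g.unop) (Function.update c n ((a ≫ g.unop) ≫ t)) ρ =
      Φ.val l _ k (a ≫ g.unop) (Function.update c n (a ≫ g.unop ≫ t)) ρ
    rw [Category.assoc]
  bond_pt _ _ _ := rfl
  bond_const n m Φ v := by
    apply CofreeSimplex.ext
    funext l hl k a c ρ
    exact Φ.collapse l _ k a _ ρ ⟨n, v, le_rfl, hl, by simp [comp_const]⟩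
  act n π :=
    { app := fun _ => TypeCat.ofHom fun Φ =>
        { val := fun l hl k a c ρ => Φ.val l hl k a c (ρ * permCastLE hl π)
          collapse := fun l hl k a c ρ => Φ.collapse l hl k a c _
          swap := fun l hl k a c ρ i hni hil => by
            rw [Φ.swap l hl k a c _ i hni hil, mul_assoc, mul_assoc,
              (commute_permCastLE_swap hl π hni (Nat.le_succ_of_le hni)).eq] } }
  act_one n := by
    ext m Φ
    apply CofreeSimplex.ext
    funext l hl k a c ρ
    show Φ.val l hl k a c (ρ * permCastLE hl 1) = Φ.val l hl k a c ρ
    rw [map_one, mul_one]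
  act_mul n π ρ' := by
    ext m Φ
    apply CofreeSimplex.ext
    funext l hl k a c ρ
    show Φ.val l hl k a c (ρ * permCastLE hl (π * ρ')) =
      Φ.val l hl k a c (ρ * permCastLE hl π * permCastLE hl ρ')
    rw [map_mul, mul_assoc]
  act_pt _ _ _ := rfl
  act_bond n π m Φ t := by
    apply CofreeSimplex.ext
    funext l hl k a c ρ
    show Φ.val l _ k a _ (ρ * permCastLE _ π) = Φ.val l _ k a _ (ρ * permCastLE hl (permExtend π))
    rw [permExtend_eq_permCastLE, permCastLE_permCastLE]
  bond_twist n m Φ t u := by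
    apply CofreeSimplex.ext
    funext l hl k a c ρ
    have hl' : n + 2 ≤ l := hl
    have hupdate : Function.update (Function.update c (n + 1) (a ≫ t)) n (a ≫ u) ∘
        Equiv.swap n (n + 1) = Function.update (Function.update c (n + 1) (a ≫ u)) n (a ≫ t) := by
      funext j
      simp only [Function.comp_apply, Function.update_apply, Equiv.swap_apply_def]
      split_ifs <;> first | rfl | omega
    have hswap := Φ.swap l (by omega) k a
      (Function.update (Function.update c (n + 1) (a ≫ t)) n (a ≫ u)) ρ n le_rfl hl'
    rw [hupdate] at hswap
    change Φ.val l _ k a _ ρ = Φ.val l _ k a _ (ρ * permCastLE hl (permTwist n))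
    rw [hswap, permCastLE_permTwist hl']

noncomputable def toCofree (Xs : SymSpectrum) : Xs ⟶ cofreeSpec Xs where
  app n :=
    { app := fun m => TypeCat.ofHom fun x =>
        { val := fun l hl k a c ρ => (Xs.act l ρ).app k (Xs.iterBond c ((Xs.lvl n).X.map a.op x) hl)
          collapse := fun l hl k a c ρ hc => by
            rw [SymSpectrum.iterBond_of_hasConstCoord _ _ _ hc, Xs.act_pt]
          swap := fun l hl k a c ρ i hni hil => by
            rw [SymSpectrum.iterBond_swap _ _ _ hni hil, Xs.act_mul_apply] }
      naturality := fun _ _ g => by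
        ext x
        apply CofreeSimplex.ext
        funext l hl k a c ρ
        show (Xs.act l ρ).app k (Xs.iterBond c ((Xs.lvl n).X.map a.op ((Xs.lvl n).X.map g x)) hl) =
          (Xs.act l ρ).app k (Xs.iterBond c ((Xs.lvl n).X.map (a ≫ g.unop).op x) hl)
        rw [← Functor.map_comp_apply]
        rfl }
  app_pt n m := by
    apply CofreeSimplex.ext
    funext l hl k a c ρ
    show (Xs.act l ρ).app k (Xs.iterBond c ((Xs.lvl n).X.map a.op ((Xs.lvl n).pt m)) hl) =
      (Xs.lvl l).pt k
    rw [(Xs.lvl n).pt_nat, SymSpectrum.iterBond_pt, Xs.act_pt]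
  app_bond n m x t := by
    apply CofreeSimplex.ext
    funext l hl k a c ρ
    show (Xs.act l ρ).app k (Xs.iterBond c ((Xs.lvl (n + 1)).X.map a.op (Xs.bond n m x t)) hl) =
      (Xs.act l ρ).app k (Xs.iterBond (Function.update c n (a ≫ t)) ((Xs.lvl n).X.map a.op x) _)
    rw [Xs.bond_nat, SymSpectrum.iterBond_update]
    rfl
  app_act n π := by
    ext m x
    apply CofreeSimplex.ext
    funext l hl k a c ρ
    show (Xs.act l ρ).app k (Xs.iterBond c ((Xs.lvl n).X.map a.op ((Xs.act n π).app m x)) hl) =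
      (Xs.act l (ρ * permCastLE hl π)).app k (Xs.iterBond c ((Xs.lvl n).X.map a.op x) hl)
    rw [← NatTrans.naturality_apply, SymSpectrum.iterBond_act, Xs.act_mul_apply]

lemma toCofree_val (Xs : SymSpectrum) {n : ℕ} {m : SimplexCategoryᵒᵖ} (x : (Xs.lvl n).X.obj m)
    (l : ℕ) (hl : n ≤ l) (k : SimplexCategoryᵒᵖ) (a : k.unop ⟶ m.unop) (c : ℕ → ICoord k)
    (ρ : Equiv.Perm (Fin l)) :
    (((toCofree Xs).app n).app m x).val l hl k a c ρ =
      (Xs.act l ρ).app k (Xs.iterBond c ((Xs.lvl n).X.map a.op x) hl) :=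
  rfl

lemma toCofree_app_injective (Xs : SymSpectrum) (n : ℕ) (m : SimplexCategoryᵒᵖ) :
    Function.Injective (((toCofree Xs).app n).app m) := by
  intro x y hxy
  have := congrArg (fun Φ : CofreeSimplex Xs n m => Φ.val n le_rfl m (𝟙 _) (fun _ => iconst m 0) 1)
    hxy
  simpa [toCofree_val, Xs.act_one] using this

lemma toCofree_levelMono (Xs : SymSpectrum) : LevelMono (Forget.map (toCofree Xs)) :=
  toCofree_app_injective Xs

def PSSet.terminal : PSSet where
  X := (Functor.const _).obj PUnit
  pt _ := PUnit.unit
  pt_nat _ := rfl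

def SymSpectrum.terminal : SymSpectrum where
  lvl _ := PSSet.terminal
  bond _ _ _ _ := PUnit.unit
  bond_nat := by intros; rfl
  bond_pt := by intros; rfl
  bond_const := by intros; rfl
  act _ _ := 𝟙 _
  act_one := by intros; rfl
  act_mul := by intros; rfl
  act_pt := by intros; rfl
  act_bond := by intros; rfl
  bond_twist := by intros; rfl

def SymSpectrum.toTerminal (Xs : SymSpectrum) : Xs ⟶ SymSpectrum.terminal where
  app _ := { app := fun _ => TypeCat.ofHom fun _ => PUnit.unit }
  app_pt _ _ := rfl
  app_bond _ _ _ _ := rfl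
  app_act _ _ := rfl

section ExtendBoundary

variable {Xs : SymSpectrum} {n r : ℕ} (u : (∂Δ[r] : SSet.{0}) ⟶ (cofreeLevel Xs n).X)

open scoped Classical in
/-- Since cofree simplices need not be natural in `a`, the interior simplices of `Δ[r]` (the
surjections onto `[r]`) may go to the basepoint. -/
noncomputable def extendBoundary : (Δ[r] : SSet.{0}) ⟶ (cofreeLevel Xs n).X where
  app m := TypeCat.ofHom fun s =>
    { val := fun l hl k a c ρ =>
        if hs : Function.Surjective (a ≫ s.down).toOrderHom then (Xs.lvl l).pt k
        else (u.app k ⟨⟨a ≫ s.down⟩, hs⟩).val l hl k (𝟙 _) c ρ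
      collapse := fun l hl k a c ρ hc => by
        split_ifs
        · rfl
        · exact (u.app k _).collapse l hl k _ c ρ hc
      swap := fun l hl k a c ρ i hni hil => by
        split_ifs
        · rfl
        · exact (u.app k _).swap l hl k _ c ρ i hni hil }
  naturality _ _ g := by
    ext s
    apply CofreeSimplex.ext
    funext l hl k a c ρ
    show dite _ _ _ = dite _ _ _
    simp only [Category.assoc]
    rfl

lemma ι_comp_extendBoundary : (SSet.boundary r).ι ≫ extendBoundary u = u := by
  ext m β
  apply CofreeSimplex.ext
  funext l hl k a c ρ
  have hs : ¬ Function.Surjective (a ≫ β.1.down).toOrderHom := fun h =>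
    β.2 (Function.Surjective.of_comp (g := (SimplexCategory.Hom.toOrderHom a)) h)
  have hu := congrArg (fun Φ : CofreeSimplex Xs n k => Φ.val l hl k (𝟙 _) c ρ)
    (NatTrans.naturality_apply u a.op β)
  change (if hs' : Function.Surjective (a ≫ β.1.down).toOrderHom then (Xs.lvl l).pt k
    else (u.app k ⟨⟨a ≫ β.1.down⟩, hs'⟩).val l hl k (𝟙 _) c ρ) = (u.app m β).val l hl k a c ρ
  rw [dif_neg hs]
  exact hu.trans (congrArg (fun b => (u.app m β).val l hl k b c ρ) (Category.id_comp a))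

end ExtendBoundary

lemma levelTrivFib_cofreeSpec_toTerminal (Xs : SymSpectrum) :
    LevelTrivFib (Forget.map (cofreeSpec Xs).toTerminal) := fun _ _ =>
  ⟨fun {u _} _ =>
    ⟨⟨{ l := extendBoundary u, fac_left := ι_comp_extendBoundary u, fac_right := rfl }⟩⟩⟩

lemma levelMono_of_comp {X Y Z : SymSpectrum} (f : X ⟶ Y) (g : Y ⟶ Z)
    (h : LevelMono (Forget.map (f ≫ g))) : LevelMono (Forget.map f) :=
  fun n m => Function.Injective.of_comp (f := (SymHom.app g n).app m) (h n m)

/-- Every map of symmetric spectra belonging to `cof(F K)`, where `K` is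
the set of generating trivial cofibrations of the stable model structure on sequential
spectra and `F` is the free symmetric spectrum functor (left adjoint to the forgetful
functor), is a levelwise monomorphism of simplicial sets. -/
theorem cofImage_is_levelwise_mono
    (msN : ModelStr SeqSpectrum) (hmsN : IsStableSeq msN)
    {ι : Type} {A B : ι → SeqSpectrum} (K : ∀ i, A i ⟶ B i) (hK : msN.GeneratesTrivCof K)
    (F : SeqSpectrum ⥤ SymSpectrum) (adj : F ⊣ Forget)
    {X Y : SymSpectrum} (f : X ⟶ Y) (hf : CofOfImage F K f) :
    LevelMono (Forget.map f) := by
  have hfib : msN.Fib (Forget.map (cofreeSpec X).toTerminal) :=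
    ((hmsN.2.2 _).mpr (levelTrivFib_cofreeSpec_toTerminal X)).1
  have hlift := hf.hasLiftingProperty adj hK.1 hfib
  have sq : CommSq (toCofree X) f (cofreeSpec X).toTerminal Y.toTerminal := ⟨rfl⟩
  refine levelMono_of_comp f sq.lift ?_
  rw [sq.fac_left]
  exact toCofree_levelMono X

end SpectraFormal
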